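/- Let I be a monomial ideal of S = K[t_1,…,t_s] and let p be an associated prime of I. Then for all n ≥ 1, I^n S_p ∩ S = (I S_p ∩ S)^n, i.e., the contraction to S of the extension of I^n to S_p equals the n-th power of the contraction to S of the extension of I to S_p. -/

import Mathlib

open MvPolynomial Pointwise

/-- The contraction `J S_p ∩ S` to `R` of the extension of an ideal `J` to the
localization of `R` at a prime ideal `p`. -/
noncomputable def contractAt {R : Type*} [CommRing R] (J p : Ideal R) (hp : p.IsPrime) :
    Ideal R :=
  letI := hp
  (J.map (algebraMap R (Localization.AtPrime p))).comap
    (algebraMap R (Localization.AtPrime p))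

/-- The `n`-th symbolic power `I^{(n)} = ⋂_{i=1}^r (Iⁿ S_{p_i} ∩ S)`, the intersection
being taken over the minimal primes `p_1, …, p_r` of `I`. -/
noncomputable def symbolicPower {R : Type*} [CommRing R] (I : Ideal R) (n : ℕ) : Ideal R :=
  ⨅ (p : Ideal R) (hp : p ∈ I.minimalPrimes), contractAt (I ^ n) p hp.1.1

/-- The set `Ass(I)` of associated primes of `I`: the prime ideals of the form
`(I : f)` for some `f ∈ S`. -/
def assPrimes {R : Type*} [CommRing R] (I : Ideal R) : Set (Ideal R) :=
  { p | p.IsPrime ∧ ∃ f : R, p = Submodule.colon I (Ideal.span {f}) }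

/-- A monomial ideal: an ideal generated by monomials. -/
def IsMonomialIdeal {s : ℕ} {K : Type*} [Field K]
    (I : Ideal (MvPolynomial (Fin s) K)) : Prop :=
  ∃ A : Set (Fin s →₀ ℕ), I = Ideal.span ((fun a => monomial a (1 : K)) '' A)

/-!
An associated prime `p = (I : f)` of a monomial ideal `I` is generated by variables: if `g f ∈ I`,
comparing lowest terms (lexicographically) shows that a power of the lowest monomial of `g`
multiplies `f` into `I`, so `p` contains every monomial of each of its elements. If
`p = (t_i : i ∈ A)`, then `I S_p ∩ S` is generated by the monomials of `I` with the variables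
outside `A` set to `1`: a polynomial `u ∉ p` is a nonzerodivisor modulo that ideal, as one sees
by comparing lowest terms for an order that weighs the `A`-degree first. Setting variables to `1`
is additive on exponents, so it commutes with the powers of monomial ideals.
-/

theorem mem_contractAt_iff {R : Type*} [CommRing R] {J p : Ideal R} (hp : p.IsPrime) {x : R} :
    x ∈ contractAt J p hp ↔ ∃ u ∉ p, u * x ∈ J :=
  letI := hp
  IsLocalization.algebraMap_mem_map_algebraMap_iff p.primeCompl _ J x

namespace MvPolynomial

variable {σ R : Type*}

section MinimalTerms

variable [CommSemiring R] {B : Type*} [AddCommMonoid B] [LinearOrder B]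
  [IsOrderedCancelAddMonoid B] {D : (σ →₀ ℕ) → B}

theorem coeff_add_mul_of_forall_le (hadd : ∀ a b, D (a + b) = D a + D b) (hD : D.Injective)
    {f g : MvPolynomial σ R} {d e : σ →₀ ℕ}
    (hd : ∀ x ∈ f.support, D d ≤ D x) (he : ∀ y ∈ g.support, D e ≤ D y) :
    coeff (d + e) (f * g) = coeff d f * coeff e g := by
  classical
  rw [coeff_mul]
  refine Finset.sum_eq_single (d, e) (fun ⟨x, y⟩ hxy hne => ?_) (by simp)
  rw [Finset.HasAntidiagonal.mem_antidiagonal] at hxy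
  by_contra hxy0
  have hx := hd x (mem_support_iff.2 (left_ne_zero_of_mul hxy0))
  have hy := he y (mem_support_iff.2 (right_ne_zero_of_mul hxy0))
  have hDsum : D x + D y = D d + D e := by rw [← hadd, ← hadd, hxy]
  obtain rfl : x = d := hD <| le_antisymm
    (not_lt.1 fun hlt => (add_lt_add_of_lt_of_le hlt hy).ne' hDsum) hx
  exact hne (Prod.ext rfl (add_left_cancel hxy))

theorem add_mem_support_mul_of_forall_le [NoZeroDivisors R]
    (hadd : ∀ a b, D (a + b) = D a + D b) (hD : D.Injective)
    {f g : MvPolynomial σ R} {d e : σ →₀ ℕ} (hdf : d ∈ f.support) (heg : e ∈ g.support)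
    (hd : ∀ x ∈ f.support, D d ≤ D x) (he : ∀ y ∈ g.support, D e ≤ D y) :
    d + e ∈ (f * g).support := by
  rw [mem_support_iff, coeff_add_mul_of_forall_le hadd hD hd he]
  exact mul_ne_zero (mem_support_iff.1 hdf) (mem_support_iff.1 heg)

end MinimalTerms

theorem card_support_monomial_mul_le [CommSemiring R] (d : σ →₀ ℕ) (r : R)
    (g : MvPolynomial σ R) :
    (monomial d r * g).support.card ≤ g.support.card := by
  classical
  calc (monomial d r * g).support.card ≤ ({d} + g.support).card :=
        Finset.card_le_card ((support_mul _ _).trans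
          (Finset.add_subset_add_right support_monomial_subset))
    _ = g.support.card := Finset.card_singleton_add d _

theorem support_sub_monomial_coeff [CommRing R] [DecidableEq σ] (g : MvPolynomial σ R)
    (d : σ →₀ ℕ) :
    (g - monomial d (coeff d g)).support = g.support.erase d := by
  ext c
  rw [Finset.mem_erase, mem_support_iff, mem_support_iff, coeff_sub, coeff_monomial]
  rcases eq_or_ne d c with rfl | h
  · simp
  · simp [h, Ne.symm h]

section MonomialIdeal

variable [CommSemiring R]

variable (R) in
noncomputable def monomialIdeal (M : Set (σ →₀ ℕ)) : Ideal (MvPolynomial σ R) :=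
  Ideal.span ((fun a => monomial a (1 : R)) '' M)

variable {M N : Set (σ →₀ ℕ)}

theorem mem_monomialIdeal {g : MvPolynomial σ R} :
    g ∈ monomialIdeal R M ↔ ∀ c ∈ g.support, ∃ a ∈ M, a ≤ c :=
  mem_ideal_span_monomial_image

theorem monomial_mem_monomialIdeal {c : σ →₀ ℕ} (r : R) (h : ∃ a ∈ M, a ≤ c) :
    monomial c r ∈ monomialIdeal R M := by
  obtain ⟨a, ha, hac⟩ := h
  rw [← tsub_add_cancel_of_le hac, ← mul_one r, ← monomial_mul]
  exact Ideal.mul_mem_left _ _ (Ideal.subset_span ⟨a, ha, rfl⟩)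

theorem monomialIdeal_le_of_forall_exists_le (h : ∀ a ∈ M, ∃ b ∈ N, b ≤ a) :
    monomialIdeal R M ≤ monomialIdeal R N :=
  Ideal.span_le.2 <| by
    rintro _ ⟨a, ha, rfl⟩
    exact monomial_mem_monomialIdeal 1 (h a ha)

theorem monomialIdeal_add :
    monomialIdeal R (M + N) = monomialIdeal R M * monomialIdeal R N := by
  rw [monomialIdeal, monomialIdeal, monomialIdeal, Ideal.span_mul_span']
  congr 1
  ext x
  simp only [Set.mem_mul, Set.mem_add, Set.mem_image]
  constructor
  · rintro ⟨_, ⟨a, ha, b, hb, rfl⟩, rfl⟩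
    exact ⟨_, ⟨a, ha, rfl⟩, _, ⟨b, hb, rfl⟩, by rw [monomial_mul, one_mul]⟩
  · rintro ⟨_, ⟨a, ha, rfl⟩, _, ⟨b, hb, rfl⟩, rfl⟩
    exact ⟨a + b, ⟨a, ha, b, hb, rfl⟩, by rw [monomial_mul, one_mul]⟩

theorem monomialIdeal_nsmul (n : ℕ) : monomialIdeal R (n • M) = monomialIdeal R M ^ n := by
  induction n with
  | zero =>
    rw [zero_nsmul, pow_zero, Ideal.one_eq_top, Ideal.eq_top_iff_one]
    exact monomial_mem_monomialIdeal (c := 0) 1 ⟨0, rfl, le_rfl⟩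
  | succ n ih => rw [succ_nsmul, monomialIdeal_add, ih, pow_succ]

end MonomialIdeal

theorem eq_span_X_of_forall_monomial_mem [CommSemiring R] {p : Ideal (MvPolynomial σ R)}
    (hp : p.IsPrime) (h : ∀ g ∈ p, ∀ c ∈ g.support, monomial c 1 ∈ p) :
    p = Ideal.span (X '' {i | X i ∈ p}) := by
  refine le_antisymm (fun g hg => mem_ideal_span_X_image.2 fun c hc => ?_)
    (Ideal.span_le.2 <| by rintro _ ⟨i, hi, rfl⟩; exact hi)
  have hc1 := h g hg c hc
  rw [monomial_eq, C_1, one_mul, Finsupp.prod, hp.prod_mem_iff] at hc1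
  obtain ⟨i, hi, hXi⟩ := hc1
  exact ⟨i, hp.mem_of_pow_mem _ hXi, Finsupp.mem_support_iff.1 hi⟩

section AssociatedPrimes

variable [CommRing R] [NoZeroDivisors R] [LinearOrder σ] {M : Set (σ →₀ ℕ)}

theorem exists_monomial_pow_mul_mem {a f : MvPolynomial σ R} {d : σ →₀ ℕ}
    (hd : d ∈ a.support) (hmin : ∀ x ∈ a.support, toLex d ≤ toLex x)
    (haf : a * f ∈ monomialIdeal R M) : ∃ k, monomial d 1 ^ k * f ∈ monomialIdeal R M := by
  classical
  induction hn : f.support.card using Nat.strong_induction_on generalizing f with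
  | _ n ih =>
  rcases eq_or_ne f 0 with rfl | hf
  · exact ⟨0, by simp⟩
  obtain ⟨e, he, hemin⟩ := f.support.exists_min_image toLex (support_nonempty.2 hf)
  set t : MvPolynomial σ R := monomial d 1
  -- the lowest term of `a * f` is the product of the lowest terms of `a` and `f`
  have hte (r : R) : t * monomial e r ∈ monomialIdeal R M := by
    rw [monomial_mul, one_mul]
    exact monomial_mem_monomialIdeal r <| mem_monomialIdeal.1 haf _ <|
      add_mem_support_mul_of_forall_le toLex_add toLex.injective hd he hmin hemin
  set f' := f - monomial e (coeff e f)
  have hcard : (t * f').support.card < n :=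
    calc _ ≤ f'.support.card := card_support_monomial_mul_le _ _ _
      _ < n := by
        rw [support_sub_monomial_coeff, ← hn]
        exact Finset.card_erase_lt_of_mem he
  have haf' : a * (t * f') ∈ monomialIdeal R M := by
    rw [show a * (t * f') = t * (a * f) - a * (t * monomial e (coeff e f)) by ring]
    exact sub_mem (Ideal.mul_mem_left _ _ haf) (Ideal.mul_mem_left _ _ (hte _))
  obtain ⟨k, hk⟩ := ih _ hcard haf' rfl
  refine ⟨k + 1, ?_⟩
  rw [show t ^ (k + 1) * f = t ^ k * (t * f') + t ^ k * (t * monomial e (coeff e f)) by ring]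
  exact add_mem hk (Ideal.mul_mem_left _ _ (hte _))

theorem monomial_mem_of_mem_colon {f : MvPolynomial σ R} {p : Ideal (MvPolynomial σ R)}
    (hp : p.IsPrime) (hpf : p = Submodule.colon (monomialIdeal R M) (Ideal.span {f}))
    {g : MvPolynomial σ R} (hg : g ∈ p) : ∀ c ∈ g.support, monomial c 1 ∈ p := by
  classical
  induction hn : g.support.card using Nat.strong_induction_on generalizing g with
  | _ n ih =>
  intro c hc
  obtain ⟨d, hd, hdmin⟩ := g.support.exists_min_image toLex ⟨c, hc⟩
  have hdp : monomial d (1 : R) ∈ p := by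
    rw [hpf, Ideal.mem_colon_span_singleton] at hg
    obtain ⟨k, hk⟩ := exists_monomial_pow_mul_mem hd hdmin hg
    exact hp.mem_of_pow_mem k (hpf ▸ Ideal.mem_colon_span_singleton.2 hk)
  rcases eq_or_ne c d with rfl | hcd
  · exact hdp
  have hg' : g - monomial d (coeff d g) ∈ p := by
    rw [← mul_one (coeff d g), ← C_mul_monomial]
    exact sub_mem hg (p.mul_mem_left _ hdp)
  refine ih _ ?_ hg' rfl c ?_ <;> rw [support_sub_monomial_coeff]
  · rw [← hn]
    exact Finset.card_erase_lt_of_mem hd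
  · exact Finset.mem_erase.2 ⟨hcd, hc⟩

end AssociatedPrimes

section Contraction

variable [CommRing R] [NoZeroDivisors R] [LinearOrder σ]

theorem mem_monomialIdeal_of_mul_mem {A : Set σ} {N : Set (σ →₀ ℕ)}
    (hN : ∀ a ∈ N, ∀ i ∉ A, a i = 0) {u g : MvPolynomial σ R}
    (hu : u ∉ Ideal.span (X '' A)) (hug : u * g ∈ monomialIdeal R N) :
    g ∈ monomialIdeal R N := by
  classical
  -- weighing the `A`-degree first makes the lowest term of `u` free of the variables in `A`
  let D : (σ →₀ ℕ) → ℕ ×ₗ Lex (σ →₀ ℕ) := fun c =>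
    toLex ((c.filter (· ∈ A)).degree, toLex c)
  have hadd (a b : σ →₀ ℕ) : D (a + b) = D a + D b := by
    simp only [D, ← toLex_add, Prod.mk_add_mk, Finsupp.filter_add, map_add]
  have hD : D.Injective := fun a b h => toLex.injective (congrArg (fun x => (ofLex x).2) h)
  obtain ⟨c₀, hc₀, hc₀A⟩ : ∃ c ∈ u.support, ∀ i ∈ A, c i = 0 := by
    simpa [mem_ideal_span_X_image] using hu
  obtain ⟨d₀, hd₀, hd₀min⟩ := u.support.exists_min_image D ⟨c₀, hc₀⟩
  have hd₀A : ∀ i ∈ A, d₀ i = 0 := by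
    have hle := Prod.Lex.monotone_fst _ _ (hd₀min c₀ hc₀)
    rwa [ofLex_toLex, ofLex_toLex, (Finsupp.filter_eq_zero_iff _ _).2 hc₀A, map_zero,
      nonpos_iff_eq_zero, Finsupp.degree_eq_zero_iff, Finsupp.filter_eq_zero_iff] at hle
  induction hn : g.support.card using Nat.strong_induction_on generalizing g with
  | _ n ih =>
  rcases eq_or_ne g 0 with rfl | hg
  · exact zero_mem _
  obtain ⟨d, hd, hdmin⟩ := g.support.exists_min_image D (support_nonempty.2 hg)
  have hdN : monomial d (coeff d g) ∈ monomialIdeal R N := by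
    obtain ⟨a, ha, hle⟩ := mem_monomialIdeal.1 hug _
      (add_mem_support_mul_of_forall_le hadd hD hd₀ hd hd₀min hdmin)
    refine monomial_mem_monomialIdeal _ ⟨a, ha, fun i => ?_⟩
    by_cases hi : i ∈ A
    · simpa [hd₀A i hi] using hle i
    · simp [hN a ha i hi]
  have hg' : g - monomial d (coeff d g) ∈ monomialIdeal R N := by
    refine ih _ ?_ (by rw [mul_sub]; exact sub_mem hug (Ideal.mul_mem_left _ _ hdN)) rfl
    rw [support_sub_monomial_coeff, ← hn]
    exact Finset.card_erase_lt_of_mem hd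
  simpa using add_mem hg' hdN

theorem contractAt_monomialIdeal [Nontrivial R] {A : Set σ} [DecidablePred (· ∈ A)]
    {p : Ideal (MvPolynomial σ R)} (hp : p.IsPrime) (hpA : p = Ideal.span (X '' A))
    (M : Set (σ →₀ ℕ)) :
    contractAt (monomialIdeal R M) p hp = monomialIdeal R (Finsupp.filter (· ∈ A) '' M) := by
  subst hpA
  refine le_antisymm (fun g hg => ?_) (Ideal.span_le.2 ?_)
  · obtain ⟨u, hu, hug⟩ := (mem_contractAt_iff hp).1 hg
    refine mem_monomialIdeal_of_mul_mem ?_ hu (monomialIdeal_le_of_forall_exists_le ?_ hug)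
    · rintro _ ⟨a, -, rfl⟩ i hi
      exact Finsupp.filter_apply_neg _ _ hi
    · exact fun a ha =>
        ⟨_, ⟨a, ha, rfl⟩, le_self_add.trans_eq (Finsupp.filter_add_filter_not a _)⟩
  · rintro _ ⟨_, ⟨a, ha, rfl⟩, rfl⟩
    refine (mem_contractAt_iff hp).2 ⟨monomial (a.filter (· ∉ A)) 1, ?_, ?_⟩
    · simp +contextual [mem_ideal_span_X_image, Finsupp.filter_apply]
    · rw [monomial_mul, one_mul, add_comm, Finsupp.filter_add_filter_not]
      exact Ideal.subset_span ⟨a, ha, rfl⟩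

end Contraction

end MvPolynomial

/-- **Proposition.** Let `I` be a monomial ideal of `S = K[t_1,…,t_s]` and let `p` be an
associated prime of `I`. Then `Iⁿ S_p ∩ S = (I S_p ∩ S)ⁿ` for all `n ≥ 1`. -/
theorem contract_pow_eq_pow_contract {s : ℕ} (K : Type*) [Field K]
    (I p : Ideal (MvPolynomial (Fin s) K)) (hI : IsMonomialIdeal I)
    (hp : p ∈ assPrimes I) :
    ∀ n : ℕ, 1 ≤ n → contractAt (I ^ n) p hp.1 = (contractAt I p hp.1) ^ n := by
  classical
  obtain ⟨M, rfl⟩ := hI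
  obtain ⟨f, hpf⟩ := hp.2
  have hpA : p = Ideal.span (X '' {i | X i ∈ p}) :=
    eq_span_X_of_forall_monomial_mem hp.1 fun g hg => monomial_mem_of_mem_colon hp.1 hpf hg
  intro n _
  change contractAt (monomialIdeal K M ^ n) p hp.1 = contractAt (monomialIdeal K M) p hp.1 ^ n
  rw [← monomialIdeal_nsmul, contractAt_monomialIdeal hp.1 hpA,
    contractAt_monomialIdeal hp.1 hpA, ← monomialIdeal_nsmul]
  exact congrArg _ (Set.image_nsmul (Finsupp.filterAddHom _) M n)
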